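/- The polynomial Π(ω) = (1/64)(1+ω)³(32 - 33ω + 3ω² + 9ω³ - 3ω⁴) satisfies Π(ω) + Π(-ω) = 1 for all ω, Π(0) = 1/2, Π(1) = 1, Π(-1) = 0, and Π is nondecreasing on [-1,1]. -/

import Mathlib

/-! The symmetry and the endpoint values are polynomial identities. Monotonicity comes from the
factorisation `Π'(ω) = (21/64) (1 - ω²)² (3 - ω²)` of the derivative, which is nonnegative
for `|ω| ≤ √3`, in particular on `[-1, 1]`. -/

open Set

noncomputable section

def piPoly (ω : ℝ) : ℝ :=
  (1 / 64) * (1 + ω) ^ 3 * (32 - 33 * ω + 3 * ω ^ 2 + 9 * ω ^ 3 - 3 * ω ^ 4)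

lemma piPoly_add_piPoly_neg (ω : ℝ) : piPoly ω + piPoly (-ω) = 1 := by
  unfold piPoly; ring

lemma hasDerivAt_piPoly (x : ℝ) :
    HasDerivAt piPoly ((21 / 64) * (1 - x ^ 2) ^ 2 * (3 - x ^ 2)) x := by
  have hcube : HasDerivAt (fun ω : ℝ => (1 + ω) ^ 3) (3 * (1 + x) ^ 2) x := by
    simpa using ((hasDerivAt_id x).const_add 1).fun_pow 3
  have hquartic : HasDerivAt (fun ω : ℝ => 32 - 33 * ω + 3 * ω ^ 2 + 9 * ω ^ 3 - 3 * ω ^ 4)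
      (-33 + 6 * x + 27 * x ^ 2 - 12 * x ^ 3) x := by
    have := ((((hasDerivAt_const x (32 : ℝ)).fun_sub ((hasDerivAt_id x).const_mul 33)).fun_add
      ((hasDerivAt_pow 2 x).const_mul 3)).fun_add ((hasDerivAt_pow 3 x).const_mul 9)).fun_sub
      ((hasDerivAt_pow 4 x).const_mul 3)
    exact this.congr_deriv (by ring)
  exact ((hcube.const_mul (1 / 64)).fun_mul hquartic).congr_deriv (by ring)

lemma monotoneOn_piPoly : MonotoneOn piPoly (Icc (-√3) √3) := by
  refine monotoneOn_of_hasDerivWithinAt_nonneg (convex_Icc _ _)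
    (fun x _ => (hasDerivAt_piPoly x).continuousAt.continuousWithinAt)
    (fun x _ => (hasDerivAt_piPoly x).hasDerivWithinAt) fun x hx => ?_
  rw [interior_Icc, mem_Ioo] at hx
  have hx2 : x ^ 2 ≤ 3 := by
    simpa only [Real.sq_sqrt (by norm_num : (0 : ℝ) ≤ 3)] using
      sq_le_sq' hx.1.le hx.2.le
  have : 0 ≤ 3 - x ^ 2 := by linarith
  positivity

end

theorem stmt_16 (Pi : ℝ → ℝ)
    (hPi : ∀ ω : ℝ, Pi ω = (1 / 64) * (1 + ω) ^ 3 *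
      (32 - 33 * ω + 3 * ω ^ 2 + 9 * ω ^ 3 - 3 * ω ^ 4)) :
    (∀ ω : ℝ, Pi ω + Pi (-ω) = 1) ∧ Pi 0 = 1 / 2 ∧ Pi 1 = 1 ∧ Pi (-1) = 0 ∧
    MonotoneOn Pi (Set.Icc (-1 : ℝ) 1) := by
  obtain rfl : Pi = piPoly := funext hPi
  have one_le_sqrt_three : (1 : ℝ) ≤ √3 := by
    rw [Real.one_le_sqrt]; norm_num
  refine ⟨piPoly_add_piPoly_neg, by norm_num [piPoly], by norm_num [piPoly], by norm_num [piPoly],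
    ?_⟩
  exact monotoneOn_piPoly.mono (Icc_subset_Icc (neg_le_neg one_le_sqrt_three) one_le_sqrt_three)
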